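/- Let α ∈ ℝ, let n ≥ 1 be an integer, let R : [0,∞) → ℝ^{d×d} be differentiable with ‖R(t)‖ ≤ M (1+t)^{n−1} e^{α t} and ‖R′(t)‖ ≤ M (1+t)^{n} e^{α t} for all t ≥ 0 and some M > 0, and let Σ : [0,∞) → ℝ^{d×d'} be continuous with ∫₀^∞ e^{−2α s} ‖Σ(s)‖² ds < ∞. For 0 ≤ s ≤ t define H(t,s) = t^{−n} e^{−α t} R(t−s) Σ(s) and H₁(t,s) = ∂H/∂t (t,s) = t^{−n} e^{−α t} R′(t−s) Σ(s) − α t^{−n} e^{−α t} R(t−s) Σ(s) − n t^{−n−1} e^{−α t} R(t−s) Σ(s). Then there exists a constant C > 0 such that ∫₀^t ‖H₁(t,s)‖² ds ≤ C for all t ≥ 1. -/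
import Mathlib


open MeasureTheory Set Filter Matrix

/-- Frobenius norm of a real matrix. -/
noncomputable def frob {d e : ℕ} (A : Matrix (Fin d) (Fin e) ℝ) : ℝ :=
  Real.sqrt (∑ i, ∑ j, (A i j) ^ 2)

section FrobLemmas
attribute [local instance] Matrix.frobeniusSeminormedAddCommGroup Matrix.frobeniusNormedSpace

lemma frob_eq_norm {d e : ℕ} (A : Matrix (Fin d) (Fin e) ℝ) : frob A = ‖A‖ := by
  rw [frob, Matrix.frobenius_norm_def, Real.sqrt_eq_rpow]
  congr 1
  refine Finset.sum_congr rfl fun i _ => Finset.sum_congr rfl fun j _ => ?_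
  rw [Real.norm_eq_abs, Real.rpow_two, sq_abs]

lemma frob_nonneg {d e : ℕ} (A : Matrix (Fin d) (Fin e) ℝ) : 0 ≤ frob A :=
  Real.sqrt_nonneg _

lemma frob_sub_le {d e : ℕ} (A B : Matrix (Fin d) (Fin e) ℝ) :
    frob (A - B) ≤ frob A + frob B := by
  simp only [frob_eq_norm]; exact norm_sub_le A B

lemma frob_smul {d e : ℕ} (c : ℝ) (A : Matrix (Fin d) (Fin e) ℝ) :
    frob (c • A) = |c| * frob A := by
  simp only [frob_eq_norm]; rw [norm_smul, Real.norm_eq_abs]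

lemma frob_mul_le {d e f : ℕ} (A : Matrix (Fin d) (Fin e) ℝ) (B : Matrix (Fin e) (Fin f) ℝ) :
    frob (A * B) ≤ frob A * frob B := by
  simp only [frob_eq_norm]; exact Matrix.frobenius_norm_mul A B
end FrobLemmas

/-- uniform bound on the `L²`-norm in `s` of the time derivative
`H₁(t,s) = t^{−n}e^{−αt}R′(t−s)Σ(s) − α t^{−n}e^{−αt}R(t−s)Σ(s) − n t^{−n−1}e^{−αt}R(t−s)Σ(s)`
of the kernel `H(t,s) = t^{−n}e^{−αt}R(t−s)Σ(s)`, for `t ≥ 1`. -/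
theorem stmt12 (d d' : ℕ) (α : ℝ) (n : ℕ) (hn : 1 ≤ n)
    (R R' : ℝ → Matrix (Fin d) (Fin d) ℝ)
    (hR : ∀ t ∈ Ici (0 : ℝ), ∀ i k,
      HasDerivWithinAt (fun u => R u i k) (R' t i k) (Ici 0) t)
    (M : ℝ) (hM : 0 < M)
    (hRbd : ∀ t ≥ (0 : ℝ), frob (R t) ≤ M * (1 + t) ^ (n - 1) * Real.exp (α * t))
    (hR'bd : ∀ t ≥ (0 : ℝ), frob (R' t) ≤ M * (1 + t) ^ n * Real.exp (α * t))
    (Sig : ℝ → Matrix (Fin d) (Fin d') ℝ)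
    (hSig : ∀ i k, Continuous fun t => Sig t i k)
    (hSigint : IntegrableOn
      (fun s => Real.exp (-(2 * α * s)) * frob (Sig s) ^ 2) (Ici 0)) :
    ∃ C > (0 : ℝ), ∀ t ≥ (1 : ℝ),
      (∫ s in Icc (0 : ℝ) t,
        frob (((t ^ n)⁻¹ * Real.exp (-(α * t))) • (R' (t - s) * Sig s) -
              (α * (t ^ n)⁻¹ * Real.exp (-(α * t))) • (R (t - s) * Sig s) -
              ((n : ℝ) * (t ^ (n + 1))⁻¹ * Real.exp (-(α * t))) • (R (t - s) * Sig s)) ^ 2)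
        ≤ C := by
  set K : ℝ := M * (2 ^ n + |α| * 2 ^ (n - 1) + (n : ℝ) * 2 ^ (n - 1)) with hKdef
  have hK : 0 < K := by
    apply mul_pos hM
    have h1 : (0:ℝ) < 2 ^ n := by positivity
    have h2 : (0:ℝ) ≤ |α| * 2 ^ (n - 1) := by positivity
    have h3 : (0:ℝ) ≤ (n : ℝ) * 2 ^ (n - 1) := by positivity
    linarith
  set I : ℝ := ∫ s in Ici (0:ℝ), Real.exp (-(2 * α * s)) * frob (Sig s) ^ 2 with hIdef
  have hI : 0 ≤ I := by
    apply setIntegral_nonneg measurableSet_Ici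
    intro s _
    positivity
  refine ⟨K ^ 2 * I + 1, by positivity, fun t ht => ?_⟩
  have ht0 : (0:ℝ) < t := lt_of_lt_of_le one_pos ht
  have htn : (0:ℝ) < t ^ n := pow_pos ht0 n
  have htn1 : (0:ℝ) < t ^ (n + 1) := pow_pos ht0 (n + 1)
  -- pointwise bound
  have hpt : ∀ s ∈ Icc (0:ℝ) t,
      frob (((t ^ n)⁻¹ * Real.exp (-(α * t))) • (R' (t - s) * Sig s) -
            (α * (t ^ n)⁻¹ * Real.exp (-(α * t))) • (R (t - s) * Sig s) -
            ((n : ℝ) * (t ^ (n + 1))⁻¹ * Real.exp (-(α * t))) • (R (t - s) * Sig s)) ^ 2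
        ≤ K ^ 2 * (Real.exp (-(2 * α * s)) * frob (Sig s) ^ 2) := by
    intro s hs
    obtain ⟨hs0, hst⟩ := hs
    have hu : (0:ℝ) ≤ t - s := by linarith
    have hP : 0 ≤ frob (Sig s) := frob_nonneg _
    have h2t : 1 + (t - s) ≤ 2 * t := by linarith
    have h1u : (0:ℝ) ≤ 1 + (t - s) := by linarith
    have h2n : (1 + (t - s)) ^ n ≤ 2 ^ n * t ^ n := by
      calc (1 + (t - s)) ^ n ≤ (2 * t) ^ n := pow_le_pow_left₀ h1u h2t n
        _ = 2 ^ n * t ^ n := mul_pow 2 t n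
    have h2n1 : (1 + (t - s)) ^ (n - 1) ≤ 2 ^ (n - 1) * t ^ n := by
      calc (1 + (t - s)) ^ (n - 1) ≤ (2 * t) ^ (n - 1) := pow_le_pow_left₀ h1u h2t _
        _ = 2 ^ (n - 1) * t ^ (n - 1) := mul_pow 2 t _
        _ ≤ 2 ^ (n - 1) * t ^ n := by
            have := pow_le_pow_right₀ ht (show n - 1 ≤ n by omega)
            have h2 : (0:ℝ) ≤ 2 ^ (n - 1) := by positivity
            nlinarith
    have h2n2 : (1 + (t - s)) ^ (n - 1) ≤ 2 ^ (n - 1) * t ^ (n + 1) := by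
      calc (1 + (t - s)) ^ (n - 1) ≤ 2 ^ (n - 1) * t ^ n := h2n1
        _ ≤ 2 ^ (n - 1) * t ^ (n + 1) := by
            have := pow_le_pow_right₀ ht (show n ≤ n + 1 by omega)
            have h2 : (0:ℝ) ≤ 2 ^ (n - 1) := by positivity
            nlinarith
    have hexp : Real.exp (-(α * t)) * Real.exp (α * (t - s)) = Real.exp (-(α * s)) := by
      rw [← Real.exp_add]; congr 1; ring
    -- norm bounds for the matrix products
    have hRu : frob (R (t - s) * Sig s)
        ≤ M * (1 + (t - s)) ^ (n - 1) * Real.exp (α * (t - s)) * frob (Sig s) :=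
      le_trans (frob_mul_le _ _)
        (mul_le_mul_of_nonneg_right (hRbd _ hu) hP)
    have hR'u : frob (R' (t - s) * Sig s)
        ≤ M * (1 + (t - s)) ^ n * Real.exp (α * (t - s)) * frob (Sig s) :=
      le_trans (frob_mul_le _ _)
        (mul_le_mul_of_nonneg_right (hR'bd _ hu) hP)
    -- the three scalar coefficients
    have habs1 : |(t ^ n)⁻¹ * Real.exp (-(α * t))| = (t ^ n)⁻¹ * Real.exp (-(α * t)) := by
      apply abs_of_pos; positivity
    have habs2 : |α * (t ^ n)⁻¹ * Real.exp (-(α * t))|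
        = |α| * ((t ^ n)⁻¹ * Real.exp (-(α * t))) := by
      rw [abs_mul, abs_mul, abs_of_pos (show (0:ℝ) < (t ^ n)⁻¹ by positivity),
        abs_of_pos (Real.exp_pos _)]
      ring
    have habs3 : |(n : ℝ) * (t ^ (n + 1))⁻¹ * Real.exp (-(α * t))|
        = (n : ℝ) * (t ^ (n + 1))⁻¹ * Real.exp (-(α * t)) := by
      apply abs_of_nonneg; positivity
    -- triangle inequality
    have htri : frob (((t ^ n)⁻¹ * Real.exp (-(α * t))) • (R' (t - s) * Sig s) -
            (α * (t ^ n)⁻¹ * Real.exp (-(α * t))) • (R (t - s) * Sig s) -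
            ((n : ℝ) * (t ^ (n + 1))⁻¹ * Real.exp (-(α * t))) • (R (t - s) * Sig s))
        ≤ (t ^ n)⁻¹ * Real.exp (-(α * t)) * frob (R' (t - s) * Sig s)
          + |α| * ((t ^ n)⁻¹ * Real.exp (-(α * t))) * frob (R (t - s) * Sig s)
          + (n : ℝ) * (t ^ (n + 1))⁻¹ * Real.exp (-(α * t)) * frob (R (t - s) * Sig s) := by
      calc _ ≤ frob (((t ^ n)⁻¹ * Real.exp (-(α * t))) • (R' (t - s) * Sig s) -
            (α * (t ^ n)⁻¹ * Real.exp (-(α * t))) • (R (t - s) * Sig s))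
            + frob (((n : ℝ) * (t ^ (n + 1))⁻¹ * Real.exp (-(α * t))) • (R (t - s) * Sig s)) :=
          frob_sub_le _ _
        _ ≤ frob (((t ^ n)⁻¹ * Real.exp (-(α * t))) • (R' (t - s) * Sig s))
            + frob ((α * (t ^ n)⁻¹ * Real.exp (-(α * t))) • (R (t - s) * Sig s))
            + frob (((n : ℝ) * (t ^ (n + 1))⁻¹ * Real.exp (-(α * t))) • (R (t - s) * Sig s)) := by
          have := frob_sub_le (((t ^ n)⁻¹ * Real.exp (-(α * t))) • (R' (t - s) * Sig s))
            ((α * (t ^ n)⁻¹ * Real.exp (-(α * t))) • (R (t - s) * Sig s))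
          linarith
        _ = _ := by rw [frob_smul, frob_smul, frob_smul, habs1, habs2, habs3]
    -- bound each of the three terms
    have key1 : (1 + (t - s)) ^ n * (t ^ n)⁻¹ ≤ 2 ^ n := by
      rw [← div_eq_mul_inv, div_le_iff₀ htn]; linarith
    have key2 : (1 + (t - s)) ^ (n - 1) * (t ^ n)⁻¹ ≤ 2 ^ (n - 1) := by
      rw [← div_eq_mul_inv, div_le_iff₀ htn]; linarith
    have key3 : (1 + (t - s)) ^ (n - 1) * (t ^ (n + 1))⁻¹ ≤ 2 ^ (n - 1) := by
      rw [← div_eq_mul_inv, div_le_iff₀ htn1]; linarith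
    have hQ : 0 ≤ Real.exp (-(α * s)) * frob (Sig s) := by positivity
    have hB1 : (t ^ n)⁻¹ * Real.exp (-(α * t)) * frob (R' (t - s) * Sig s)
        ≤ M * 2 ^ n * (Real.exp (-(α * s)) * frob (Sig s)) := by
      calc (t ^ n)⁻¹ * Real.exp (-(α * t)) * frob (R' (t - s) * Sig s)
          ≤ (t ^ n)⁻¹ * Real.exp (-(α * t)) *
            (M * (1 + (t - s)) ^ n * Real.exp (α * (t - s)) * frob (Sig s)) := by
            apply mul_le_mul_of_nonneg_left hR'u; positivity
        _ = M * ((1 + (t - s)) ^ n * (t ^ n)⁻¹) *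
            (Real.exp (-(α * t)) * Real.exp (α * (t - s)) * frob (Sig s)) := by ring
        _ = M * ((1 + (t - s)) ^ n * (t ^ n)⁻¹) * (Real.exp (-(α * s)) * frob (Sig s)) := by
            rw [hexp]
        _ ≤ M * 2 ^ n * (Real.exp (-(α * s)) * frob (Sig s)) := by
            apply mul_le_mul_of_nonneg_right _ hQ
            exact mul_le_mul_of_nonneg_left key1 hM.le
    have hB2 : |α| * ((t ^ n)⁻¹ * Real.exp (-(α * t))) * frob (R (t - s) * Sig s)
        ≤ |α| * (M * 2 ^ (n - 1)) * (Real.exp (-(α * s)) * frob (Sig s)) := by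
      calc |α| * ((t ^ n)⁻¹ * Real.exp (-(α * t))) * frob (R (t - s) * Sig s)
          ≤ |α| * ((t ^ n)⁻¹ * Real.exp (-(α * t))) *
            (M * (1 + (t - s)) ^ (n - 1) * Real.exp (α * (t - s)) * frob (Sig s)) := by
            apply mul_le_mul_of_nonneg_left hRu; positivity
        _ = |α| * (M * ((1 + (t - s)) ^ (n - 1) * (t ^ n)⁻¹)) *
            (Real.exp (-(α * t)) * Real.exp (α * (t - s)) * frob (Sig s)) := by ring
        _ = |α| * (M * ((1 + (t - s)) ^ (n - 1) * (t ^ n)⁻¹)) *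
            (Real.exp (-(α * s)) * frob (Sig s)) := by rw [hexp]
        _ ≤ |α| * (M * 2 ^ (n - 1)) * (Real.exp (-(α * s)) * frob (Sig s)) := by
            apply mul_le_mul_of_nonneg_right _ hQ
            apply mul_le_mul_of_nonneg_left _ (abs_nonneg α)
            exact mul_le_mul_of_nonneg_left key2 hM.le
    have hB3 : (n : ℝ) * (t ^ (n + 1))⁻¹ * Real.exp (-(α * t)) * frob (R (t - s) * Sig s)
        ≤ (n : ℝ) * (M * 2 ^ (n - 1)) * (Real.exp (-(α * s)) * frob (Sig s)) := by
      calc (n : ℝ) * (t ^ (n + 1))⁻¹ * Real.exp (-(α * t)) * frob (R (t - s) * Sig s)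
          ≤ (n : ℝ) * (t ^ (n + 1))⁻¹ * Real.exp (-(α * t)) *
            (M * (1 + (t - s)) ^ (n - 1) * Real.exp (α * (t - s)) * frob (Sig s)) := by
            apply mul_le_mul_of_nonneg_left hRu; positivity
        _ = (n : ℝ) * (M * ((1 + (t - s)) ^ (n - 1) * (t ^ (n + 1))⁻¹)) *
            (Real.exp (-(α * t)) * Real.exp (α * (t - s)) * frob (Sig s)) := by ring
        _ = (n : ℝ) * (M * ((1 + (t - s)) ^ (n - 1) * (t ^ (n + 1))⁻¹)) *
            (Real.exp (-(α * s)) * frob (Sig s)) := by rw [hexp]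
        _ ≤ (n : ℝ) * (M * 2 ^ (n - 1)) * (Real.exp (-(α * s)) * frob (Sig s)) := by
            apply mul_le_mul_of_nonneg_right _ hQ
            apply mul_le_mul_of_nonneg_left _ (Nat.cast_nonneg n)
            exact mul_le_mul_of_nonneg_left key3 hM.le
    have hfb : frob (((t ^ n)⁻¹ * Real.exp (-(α * t))) • (R' (t - s) * Sig s) -
            (α * (t ^ n)⁻¹ * Real.exp (-(α * t))) • (R (t - s) * Sig s) -
            ((n : ℝ) * (t ^ (n + 1))⁻¹ * Real.exp (-(α * t))) • (R (t - s) * Sig s))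
        ≤ K * (Real.exp (-(α * s)) * frob (Sig s)) := by
      have : M * 2 ^ n * (Real.exp (-(α * s)) * frob (Sig s))
          + |α| * (M * 2 ^ (n - 1)) * (Real.exp (-(α * s)) * frob (Sig s))
          + (n : ℝ) * (M * 2 ^ (n - 1)) * (Real.exp (-(α * s)) * frob (Sig s))
          = K * (Real.exp (-(α * s)) * frob (Sig s)) := by rw [hKdef]; ring
      linarith [htri, hB1, hB2, hB3]
    have hsq := pow_le_pow_left₀
      (frob_nonneg (((t ^ n)⁻¹ * Real.exp (-(α * t))) • (R' (t - s) * Sig s) -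
            (α * (t ^ n)⁻¹ * Real.exp (-(α * t))) • (R (t - s) * Sig s) -
            ((n : ℝ) * (t ^ (n + 1))⁻¹ * Real.exp (-(α * t))) • (R (t - s) * Sig s)))
      hfb 2
    have heq : (K * (Real.exp (-(α * s)) * frob (Sig s))) ^ 2
        = K ^ 2 * (Real.exp (-(2 * α * s)) * frob (Sig s) ^ 2) := by
      have e2 : Real.exp (-(α * s)) ^ 2 = Real.exp (-(2 * α * s)) := by
        rw [sq, ← Real.exp_add]; congr 1; ring
      rw [← e2]; ring
    rw [heq] at hsq
    exact hsq
  -- integrability of the dominating function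
  have hgint : IntegrableOn
      (fun s => K ^ 2 * (Real.exp (-(2 * α * s)) * frob (Sig s) ^ 2)) (Icc (0:ℝ) t) :=
    (hSigint.mono_set Icc_subset_Ici_self).const_mul (K ^ 2)
  calc (∫ s in Icc (0 : ℝ) t,
        frob (((t ^ n)⁻¹ * Real.exp (-(α * t))) • (R' (t - s) * Sig s) -
              (α * (t ^ n)⁻¹ * Real.exp (-(α * t))) • (R (t - s) * Sig s) -
              ((n : ℝ) * (t ^ (n + 1))⁻¹ * Real.exp (-(α * t))) • (R (t - s) * Sig s)) ^ 2)
      ≤ ∫ s in Icc (0:ℝ) t, K ^ 2 * (Real.exp (-(2 * α * s)) * frob (Sig s) ^ 2) := by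
        apply integral_mono_of_nonneg
        · exact Eventually.of_forall fun s => by positivity
        · exact hgint
        · exact (ae_restrict_mem measurableSet_Icc).mono fun s hs => hpt s hs
    _ = K ^ 2 * ∫ s in Icc (0:ℝ) t, Real.exp (-(2 * α * s)) * frob (Sig s) ^ 2 :=
        integral_const_mul _ _
    _ ≤ K ^ 2 * I := by
        apply mul_le_mul_of_nonneg_left _ (sq_nonneg K)
        apply setIntegral_mono_set hSigint
        · exact Eventually.of_forall fun s => by positivity
        · exact (Icc_subset_Ici_self).eventuallyLE
    _ ≤ K ^ 2 * I + 1 := by linarith
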